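/- Recurrence relation for Sheffer F-polynomials: let Q be a ∂_F-delta operator whose Graves–Pincherle F-derivative Q' is invertible in Σ_F, let S ∈ Σ_F be invertible in Σ_F, and let (s_n)_{n≥0} be the sequence of Sheffer F-polynomials of Q relative to S (i.e. s_n = S^{−1} q_n with (q_n) the ∂_F-basic sequence of Q). Then for every n ≥ 0: s_{n+1} = (F_{n+1}/(n+1)) · [x̂_F − S' ∘ S^{−1}] ∘ (Q')^{−1} s_n, where F_{n+1}/(n+1) ∈ K via the characteristic-zero embedding of the rationals. -/

import Mathlib

set_option linter.unusedSectionVars false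
set_option maxHeartbeats 1000000


open Polynomial Finset

/-- F-factorial: `Ffact n = F_n · F_{n-1} ··· F_1`, with `Ffact 0 = 1`. -/
def Ffact (n : ℕ) : ℕ := ∏ i ∈ Finset.range n, Nat.fib (i + 1)

/-- Fibonomial coefficient `C_F(n,k) = F_n!/(F_k!·F_{n−k}!)`, taken in a field `K`. -/
noncomputable def fibnom (K : Type*) [Field K] (n k : ℕ) : K :=
  (Ffact n : K) / ((Ffact k : K) * (Ffact (n - k) : K))

variable (K : Type*) [Field K] [CharZero K]

/-- The F-derivative `∂_F`, the linear operator with `∂_F x^n = F_n x^{n-1}`. -/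
noncomputable def fderivF : Module.End K (Polynomial K) :=
  Polynomial.lsum fun n => (Nat.fib n : K) • (Polynomial.monomial (n - 1) : K →ₗ[K] Polynomial K)

/-- The F-translation operator `E^y(∂_F) = Σ_{k≥0} (y^k/F_k!) ∂_F^k`; since `∂_F`
strictly decreases degree, the sum truncated at `natDegree p + 1` is the full sum. -/
noncomputable def Etrans (y : K) (p : Polynomial K) : Polynomial K :=
  ∑ k ∈ Finset.range (p.natDegree + 1), (y ^ k / (Ffact k : K)) • ((fderivF K ^ k) p)

/-- A linear operator on `K[x]` is `∂_F`-shift invariant iff it commutes with every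
F-translation operator `E^y(∂_F)`. -/
def ShiftInv (T : Module.End K (Polynomial K)) : Prop :=
  ∀ (y : K) (p : Polynomial K), T (Etrans K y p) = Etrans K y (T p)

/-- A `∂_F`-delta operator: a `∂_F`-shift invariant operator `Q` with `Q x` a nonzero
constant. -/
def DeltaOp (Q : Module.End K (Polynomial K)) : Prop :=
  ShiftInv K Q ∧ ∃ c : K, c ≠ 0 ∧ Q Polynomial.X = Polynomial.C c

/-- `(q_n)` is the `∂_F`-basic polynomial sequence of `Q`. -/
def BasicSeq (Q : Module.End K (Polynomial K)) (q : ℕ → Polynomial K) : Prop :=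
  (∀ n : ℕ, (q n).degree = n) ∧ q 0 = 1 ∧ (∀ n : ℕ, 1 ≤ n → (q n).eval 0 = 0) ∧
    ∀ n : ℕ, 1 ≤ n → Q (q n) = (Nat.fib n : K) • q (n - 1)

/-- The operator `x̂_F`, with `x̂_F x^n = ((n+1)/F_{n+1}) x^{n+1}`. -/
noncomputable def xF : Module.End K (Polynomial K) :=
  Polynomial.lsum fun n =>
    (((n : K) + 1) / (Nat.fib (n + 1) : K)) • (Polynomial.monomial (n + 1) : K →ₗ[K] Polynomial K)

/-- The Graves–Pincherle F-derivative `T' = T∘x̂_F − x̂_F∘T`. -/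
noncomputable def GPderiv (T : Module.End K (Polynomial K)) : Module.End K (Polynomial K) :=
  T * xF K - xF K * T

/-- `T = Σ_{k≥0} (a_k/F_k!) Q^k`, expressed via truncations: since a delta operator `Q`
strictly decreases degree, `Q^k p = 0` for `k > natDegree p`, so the truncated sums agree. -/
def OpSumRep (Q : Module.End K (Polynomial K)) (a : ℕ → K) (T : Module.End K (Polynomial K)) : Prop :=
  ∀ (p : Polynomial K) (N : ℕ), p.natDegree < N →
    T p = ∑ k ∈ Finset.range N, (a k / (Ffact k : K)) • ((Q ^ k) p)

/-- `(s_n)` is a sequence of Sheffer F-polynomials of `Q`. -/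
def ShefferSeq (Q : Module.End K (Polynomial K)) (s : ℕ → Polynomial K) : Prop :=
  (∀ n : ℕ, (s n).degree = n) ∧ (∃ c : K, c ≠ 0 ∧ s 0 = Polynomial.C c) ∧
    ∀ n : ℕ, 1 ≤ n → Q (s n) = (Nat.fib n : K) • s (n - 1)


section AuxLemmas
variable {K}


lemma fib_cast_ne_zero {n : ℕ} (hn : 1 ≤ n) : (Nat.fib n : K) ≠ 0 := by
  exact_mod_cast Nat.cast_ne_zero.2 (Nat.fib_pos.2 hn).ne'

lemma Ffact_cast_ne_zero (n : ℕ) : (Ffact n : K) ≠ 0 := by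
  have : 0 < Ffact n := Finset.prod_pos fun i _ => Nat.fib_pos.2 (Nat.succ_le_succ (Nat.zero_le i))
  exact_mod_cast Nat.cast_ne_zero.2 this.ne'

lemma fderivF_monomial (n : ℕ) (c : K) :
    fderivF K (monomial n c) = (Nat.fib n : K) • monomial (n - 1) c := by
  simp [fderivF, Polynomial.lsum_apply, Polynomial.sum_monomial_index]

lemma xF_monomial (n : ℕ) (c : K) :
    xF K (monomial n c) = (((n : K) + 1) / (Nat.fib (n + 1) : K)) • monomial (n + 1) c := by
  simp [xF, Polynomial.lsum_apply, Polynomial.sum_monomial_index]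

lemma fderivF_coeff (p : Polynomial K) (m : ℕ) :
    (fderivF K p).coeff m = (Nat.fib (m + 1) : K) * p.coeff (m + 1) := by
  induction p using Polynomial.induction_on' with
  | add p q hp hq => simp [hp, hq, mul_add]
  | monomial n c =>
    rw [fderivF_monomial]
    simp only [coeff_smul, coeff_monomial, smul_eq_mul]
    rcases eq_or_ne n (m + 1) with rfl | h
    · simp
    · rw [if_neg h, mul_zero]
      rcases Nat.eq_zero_or_pos n with rfl | hn
      · simp
      · rw [if_neg, mul_zero]
        omega

lemma xF_coeff_zero (p : Polynomial K) : (xF K p).coeff 0 = 0 := by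
  induction p using Polynomial.induction_on' with
  | add p q hp hq => simp [hp, hq]
  | monomial n c => rw [xF_monomial]; simp [coeff_monomial]

lemma xF_coeff_succ (p : Polynomial K) (m : ℕ) :
    (xF K p).coeff (m + 1) = (((m : K) + 1) / (Nat.fib (m + 1) : K)) * p.coeff m := by
  induction p using Polynomial.induction_on' with
  | add p q hp hq => simp [hp, hq, mul_add]
  | monomial n c =>
    rw [xF_monomial]
    simp only [coeff_smul, coeff_monomial, smul_eq_mul]
    rcases eq_or_ne n m with rfl | h
    · simp
    · rw [if_neg h, if_neg (by omega), mul_zero, mul_zero]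

lemma xF_eval_zero (p : Polynomial K) : (xF K p).eval 0 = 0 := by
  rw [← coeff_zero_eq_eval_zero, xF_coeff_zero]

lemma fderivF_pow_coeff (k : ℕ) (p : Polynomial K) (m : ℕ) :
    ((fderivF K ^ k) p).coeff m =
      (∏ i ∈ range k, (Nat.fib (m + i + 1) : K)) * p.coeff (m + k) := by
  induction k generalizing p m with
  | zero => simp
  | succ k ih =>
    rw [pow_succ, Module.End.mul_apply, ih, fderivF_coeff, Finset.prod_range_succ]
    have h1 : m + k + 1 = m + (k + 1) := by omega
    rw [h1, mul_assoc]

lemma fderivF_pow_eq_zero {p : Polynomial K} {k : ℕ} (h : p.natDegree < k) :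
    (fderivF K ^ k) p = 0 := by
  ext m
  rw [fderivF_pow_coeff, coeff_eq_zero_of_natDegree_lt (by omega), mul_zero, coeff_zero]

lemma natDegree_fderivF_pow_le (k : ℕ) (p : Polynomial K) :
    ((fderivF K ^ k) p).natDegree ≤ p.natDegree := by
  apply Polynomial.natDegree_le_iff_coeff_eq_zero.2
  intro m hm
  rw [fderivF_pow_coeff, coeff_eq_zero_of_natDegree_lt (by omega), mul_zero]

lemma Etrans_eq (y : K) (p : Polynomial K) {N : ℕ} (h : p.natDegree < N) :
    Etrans K y p = ∑ k ∈ Finset.range N, (y ^ k / (Ffact k : K)) • ((fderivF K ^ k) p) := by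
  rw [Etrans]
  apply Finset.sum_subset (Finset.range_subset_range.2 (by omega))
  intro k _ hk
  rw [Finset.mem_range, not_lt] at hk
  rw [fderivF_pow_eq_zero (by omega), smul_zero]

lemma Etrans_add (y : K) (p q : Polynomial K) :
    Etrans K y (p + q) = Etrans K y p + Etrans K y q := by
  have hN : (p + q).natDegree < max p.natDegree q.natDegree + 1 :=
    Nat.lt_succ_of_le (natDegree_add_le p q)
  rw [Etrans_eq y (p+q) hN,
    Etrans_eq y p (N := max p.natDegree q.natDegree + 1) (by omega),
    Etrans_eq y q (N := max p.natDegree q.natDegree + 1) (by omega),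
    ← Finset.sum_add_distrib]
  exact Finset.sum_congr rfl fun k _ => by rw [map_add, smul_add]

lemma Etrans_smul (y c : K) (p : Polynomial K) :
    Etrans K y (c • p) = c • Etrans K y p := by
  have hN : (c • p).natDegree < p.natDegree + 1 := Nat.lt_succ_of_le (natDegree_smul_le c p)
  rw [Etrans_eq y (c • p) hN, Etrans, Finset.smul_sum]
  exact Finset.sum_congr rfl fun k _ => by rw [map_smul, smul_comm]

variable (K) in
noncomputable def EtransL (y : K) : Module.End K (Polynomial K) where
  toFun := Etrans K y
  map_add' := Etrans_add y
  map_smul' := Etrans_smul y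

lemma EtransL_apply (y : K) (p : Polynomial K) : EtransL K y p = Etrans K y p := rfl

lemma natDegree_Etrans_le (y : K) (p : Polynomial K) :
    (Etrans K y p).natDegree ≤ p.natDegree := by
  refine le_trans (Polynomial.natDegree_sum_le _ _) ?_
  rw [Finset.fold_max_le]
  refine ⟨Nat.zero_le _, fun k _ => ?_⟩
  exact le_trans (natDegree_smul_le _ _) (natDegree_fderivF_pow_le k p)

lemma Etrans_eval_zero (y : K) (p : Polynomial K) : (Etrans K y p).eval 0 = p.eval y := by
  rw [← coeff_zero_eq_eval_zero, Etrans, Polynomial.finset_sum_coeff,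
    Polynomial.eval_eq_sum_range' (Nat.lt_succ_self _) y]
  refine Finset.sum_congr rfl fun k _ => ?_
  rw [coeff_smul, fderivF_pow_coeff, smul_eq_mul]
  have hprod : (∏ i ∈ range k, (Nat.fib (0 + i + 1) : K)) = (Ffact k : K) := by
    rw [Ffact, Nat.cast_prod]
    exact Finset.prod_congr rfl fun i _ => by rw [Nat.zero_add]
  rw [hprod, zero_add]
  field_simp [Ffact_cast_ne_zero]
  ring_nf
  rw [mul_right_comm (y ^ k * (Ffact k : K)) (p.coeff k), mul_inv_cancel_right₀ (Ffact_cast_ne_zero k)]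

lemma vec_ext {N : ℕ} {v w : ℕ → Polynomial K}
    (h : ∀ y : K, ∑ k ∈ range N, y ^ k • v k = ∑ k ∈ range N, y ^ k • w k) :
    ∀ k < N, v k = w k := by
  intro k hk
  ext m
  have hP : (∑ j ∈ range N, C ((v j).coeff m - (w j).coeff m) * X ^ j : Polynomial K) = 0 := by
    apply Polynomial.funext
    intro y
    have := congrArg (fun q => Polynomial.coeff q m) (h y)
    simp only [Polynomial.finset_sum_coeff, coeff_smul, smul_eq_mul] at this
    simp only [eval_finset_sum, eval_mul, eval_C, eval_pow, eval_X, eval_zero]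
    calc (∑ j ∈ range N, ((v j).coeff m - (w j).coeff m) * y ^ j)
        = ∑ j ∈ range N, (y ^ j * (v j).coeff m - y ^ j * (w j).coeff m) := by
          refine Finset.sum_congr rfl fun j _ => by ring
      _ = 0 := by rw [Finset.sum_sub_distrib, this, sub_self]
  have := congrArg (fun q => Polynomial.coeff q k) hP
  simp only [Polynomial.finset_sum_coeff, coeff_C_mul, coeff_X_pow, coeff_zero] at this
  rw [Finset.sum_eq_single k (fun j _ hj => by rw [if_neg (fun hh => hj hh.symm), mul_zero])
    (fun hnk => absurd (Finset.mem_range.2 hk) hnk)] at this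
  rw [if_pos rfl, mul_one, sub_eq_zero] at this
  exact this

lemma T_apply_Etrans {T : Module.End K (Polynomial K)} (y : K) (p : Polynomial K)
    {N : ℕ} (h : p.natDegree < N) :
    T (Etrans K y p) = ∑ k ∈ range N, (y ^ k / (Ffact k : K)) • T ((fderivF K ^ k) p) := by
  rw [Etrans_eq y p h, map_sum]
  exact Finset.sum_congr rfl fun k _ => map_smul T _ _

lemma shiftInv_comm_fderiv {T : Module.End K (Polynomial K)} (hT : ShiftInv K T)
    (p : Polynomial K) : T (fderivF K p) = fderivF K (T p) := by
  set N := max p.natDegree (T p).natDegree + 2 with hN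
  have key : ∀ y : K, ∑ k ∈ range N, y ^ k • ((Ffact k : K)⁻¹ • T ((fderivF K ^ k) p))
      = ∑ k ∈ range N, y ^ k • ((Ffact k : K)⁻¹ • (fderivF K ^ k) (T p)) := by
    intro y
    have h1 := hT y p
    rw [T_apply_Etrans y p (N := N) (by omega), Etrans_eq y (T p) (N := N) (by omega)] at h1
    calc ∑ k ∈ range N, y ^ k • ((Ffact k : K)⁻¹ • T ((fderivF K ^ k) p))
        = ∑ k ∈ range N, (y ^ k / (Ffact k : K)) • T ((fderivF K ^ k) p) := by
          refine Finset.sum_congr rfl fun k _ => by rw [div_eq_mul_inv, mul_smul]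
      _ = ∑ k ∈ range N, (y ^ k / (Ffact k : K)) • (fderivF K ^ k) (T p) := h1
      _ = _ := by refine Finset.sum_congr rfl fun k _ => by rw [div_eq_mul_inv, mul_smul]
  have hF1 : (Ffact 1 : K) = 1 := by norm_num [Ffact]
  simpa [hF1, pow_one] using vec_ext key 1 (by omega)

lemma shiftInv_comm_fderiv_pow {T : Module.End K (Polynomial K)} (hT : ShiftInv K T)
    (k : ℕ) (p : Polynomial K) : T ((fderivF K ^ k) p) = (fderivF K ^ k) (T p) := by
  induction k generalizing p with
  | zero => simp
  | succ k ih =>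
    rw [pow_succ, Module.End.mul_apply, Module.End.mul_apply, ih, shiftInv_comm_fderiv hT]

def ffr (n k : ℕ) : ℕ := ∏ i ∈ range k, Nat.fib (n - k + i + 1)

lemma ffact_split {k n : ℕ} (h : k ≤ n) : Ffact n = Ffact (n - k) * ffr n k := by
  have hn : n - k + k = n := by omega
  calc Ffact n = ∏ i ∈ range (n - k + k), Nat.fib (i + 1) := by rw [hn]; rfl
    _ = _ := by rw [Finset.prod_range_add]; rfl

lemma fderivF_pow_X {k n : ℕ} (h : k ≤ n) :
    (fderivF K ^ k) ((X : Polynomial K) ^ n) = ((ffr n k : K)) • X ^ (n - k) := by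
  ext m
  rw [fderivF_pow_coeff, coeff_smul, coeff_X_pow, coeff_X_pow, smul_eq_mul]
  rcases eq_or_ne m (n - k) with rfl | hm
  · rw [if_pos (by omega), if_pos rfl, mul_one, mul_one, ffr, Nat.cast_prod]
  · rw [if_neg (by omega), if_neg (fun hh => hm hh), mul_zero, mul_zero]

lemma eval_zero_smul (c : K) (p : Polynomial K) : (c • p).eval 0 = c * p.eval 0 := by
  rw [Polynomial.smul_eq_C_mul, eval_mul, eval_C]

lemma shiftInv_eval_formula {T : Module.End K (Polynomial K)} (hT : ShiftInv K T)
    (p : Polynomial K) (y : K) {M : ℕ} (h : p.natDegree < M) :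
    (T p).eval y = ∑ k ∈ range M, (y ^ k / (Ffact k : K)) * (T ((fderivF K ^ k) p)).eval 0 := by
  rw [← Etrans_eval_zero y (T p), ← hT y p, T_apply_Etrans y p h, eval_finset_sum]
  exact Finset.sum_congr rfl fun k _ => eval_zero_smul _ _

lemma ffr_symm {k n : ℕ} (h : k ≤ n) :
    (ffr n k : K) * (Ffact (n - k) : K) = (ffr n (n - k) : K) * (Ffact k : K) := by
  have h1 := ffact_split h
  have h2 := ffact_split (Nat.sub_le n k)
  rw [show n - (n - k) = k by omega] at h2
  have h3 : Ffact (n - k) * ffr n k = Ffact k * ffr n (n - k) := by rw [← h1, ← h2]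
  have h4 : ((Ffact (n - k) * ffr n k : ℕ) : K) = ((Ffact k * ffr n (n - k) : ℕ) : K) := by
    exact_mod_cast congrArg (fun x : ℕ => (x : K)) h3
  push_cast at h4
  linear_combination h4

lemma expansion_X {T : Module.End K (Polynomial K)} (hT : ShiftInv K T)
    {n N : ℕ} (hn : n < N) :
    T ((X : Polynomial K) ^ n) =
      ∑ k ∈ range N, ((T ((X : Polynomial K) ^ k)).eval 0 / (Ffact k : K)) •
        (fderivF K ^ k) ((X : Polynomial K) ^ n) := by
  set a : ℕ → K := fun k => (T ((X : Polynomial K) ^ k)).eval 0 with ha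
  apply Polynomial.funext
  intro y
  have hdeg : ((X : Polynomial K) ^ n).natDegree < n + 1 := by
    rw [natDegree_X_pow]; omega
  rw [shiftInv_eval_formula hT _ y hdeg]
  have hL : ∀ k ∈ range (n + 1),
      (y ^ k / (Ffact k : K)) * (T ((fderivF K ^ k) ((X : Polynomial K) ^ n))).eval 0
      = (y ^ k / (Ffact k : K)) * ((ffr n k : K) * a (n - k)) := by
    intro k hk
    rw [Finset.mem_range] at hk
    rw [fderivF_pow_X (by omega), map_smul, eval_zero_smul]
  rw [Finset.sum_congr rfl hL]
  have hR : (∑ k ∈ range N, (a k / (Ffact k : K)) •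
      (fderivF K ^ k) ((X : Polynomial K) ^ n)).eval y
      = ∑ k ∈ range (n + 1), (a k / (Ffact k : K)) * (ffr n k : K) * y ^ (n - k) := by
    rw [← Finset.sum_subset (Finset.range_subset_range.2 (by omega : n + 1 ≤ N))
      (fun k _ hk => by
        rw [Finset.mem_range, not_lt] at hk
        rw [fderivF_pow_eq_zero (by rw [natDegree_X_pow]; omega), smul_zero])]
    rw [eval_finset_sum]
    refine Finset.sum_congr rfl fun k hk => ?_
    rw [Finset.mem_range] at hk
    rw [fderivF_pow_X (by omega), smul_smul, Polynomial.smul_eq_C_mul, eval_mul, eval_C,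
      eval_pow, eval_X, mul_assoc]
  rw [hR, ← Finset.sum_range_reflect]
  refine Finset.sum_congr rfl fun k hk => ?_
  rw [Finset.mem_range] at hk
  have hk' : k ≤ n := by omega
  rw [show n + 1 - 1 - k = n - k by omega]
  rw [show n - (n - k) = k by omega]
  have key := ffr_symm (K := K) hk'
  have f1 : (Ffact k : K) ≠ 0 := Ffact_cast_ne_zero k
  have f2 : (Ffact (n - k) : K) ≠ 0 := Ffact_cast_ne_zero (n - k)
  have hdiv : (ffr n k : K) / (Ffact k : K) = (ffr n (n - k) : K) / (Ffact (n - k) : K) :=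
    (div_eq_div_iff f1 f2).2 key
  calc y ^ (n - k) / (Ffact (n - k) : K) * ((ffr n (n - k) : K) * a k)
      = ((ffr n (n - k) : K) / (Ffact (n - k) : K)) * a k * y ^ (n - k) := by ring
    _ = ((ffr n k : K) / (Ffact k : K)) * a k * y ^ (n - k) := by rw [hdiv]
    _ = a k / (Ffact k : K) * (ffr n k : K) * y ^ (n - k) := by ring

lemma expansion {T : Module.End K (Polynomial K)} (hT : ShiftInv K T)
    (p : Polynomial K) {N : ℕ} (h : p.natDegree < N) :
    T p = ∑ k ∈ range N, ((T ((X : Polynomial K) ^ k)).eval 0 / (Ffact k : K)) •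
      (fderivF K ^ k) p := by
  set b : ℕ → K := fun k => (T ((X : Polynomial K) ^ k)).eval 0 / (Ffact k : K) with hb
  have hp := Polynomial.as_sum_range' p N h
  have hp' : p = ∑ n ∈ range N, p.coeff n • (X : Polynomial K) ^ n := by
    rw [Finset.sum_congr rfl fun n _ => Polynomial.smul_X_eq_monomial]
    exact hp
  calc T p = T (∑ n ∈ range N, p.coeff n • (X : Polynomial K) ^ n) := by rw [← hp']
    _ = ∑ n ∈ range N, p.coeff n • T ((X : Polynomial K) ^ n) := by
        rw [map_sum]; exact Finset.sum_congr rfl fun n _ => map_smul T _ _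
    _ = ∑ n ∈ range N, p.coeff n • ∑ k ∈ range N, b k • (fderivF K ^ k) ((X : Polynomial K) ^ n) := by
        refine Finset.sum_congr rfl fun n hn => ?_
        rw [Finset.mem_range] at hn
        rw [expansion_X hT hn]
    _ = ∑ n ∈ range N, ∑ k ∈ range N, b k • (p.coeff n • (fderivF K ^ k) ((X : Polynomial K) ^ n)) := by
        refine Finset.sum_congr rfl fun n _ => ?_
        rw [Finset.smul_sum]
        exact Finset.sum_congr rfl fun k _ => smul_comm _ _ _
    _ = ∑ k ∈ range N, ∑ n ∈ range N, b k • (p.coeff n • (fderivF K ^ k) ((X : Polynomial K) ^ n)) :=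
        Finset.sum_comm
    _ = ∑ k ∈ range N, b k • (fderivF K ^ k) (∑ n ∈ range N, p.coeff n • (X : Polynomial K) ^ n) := by
        refine Finset.sum_congr rfl fun k _ => ?_
        rw [map_sum, Finset.smul_sum]
        exact Finset.sum_congr rfl fun n _ => by rw [map_smul]
    _ = ∑ k ∈ range N, b k • (fderivF K ^ k) p := by rw [← hp']

lemma shiftInv_comm {T U : Module.End K (Polynomial K)} (hT : ShiftInv K T)
    (hU : ShiftInv K U) (p : Polynomial K) : T (U p) = U (T p) := by
  set N := max p.natDegree (U p).natDegree + 1 with hN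
  rw [expansion hT (U p) (N := N) (by omega), expansion hT p (N := N) (by omega), map_sum]
  refine Finset.sum_congr rfl fun k _ => ?_
  rw [map_smul, shiftInv_comm_fderiv_pow hU]

lemma GPderiv_apply (T : Module.End K (Polynomial K)) (p : Polynomial K) :
    GPderiv K T p = T (xF K p) - xF K (T p) := rfl

lemma gp_one : GPderiv K 1 = 0 := by
  rw [GPderiv, one_mul, mul_one, sub_self]

lemma gp_mul (A B : Module.End K (Polynomial K)) :
    GPderiv K (A * B) = GPderiv K A * B + A * GPderiv K B := by
  simp only [GPderiv, mul_sub, sub_mul, mul_assoc]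
  abel

lemma gp_fderiv : GPderiv K (fderivF K) = 1 := by
  refine LinearMap.ext fun p => Polynomial.ext fun m => ?_
  rw [GPderiv_apply, Polynomial.coeff_sub, fderivF_coeff, xF_coeff_succ,
    Module.End.one_apply]
  cases m with
  | zero =>
    rw [xF_coeff_zero]
    have h1 : (Nat.fib 1 : K) ≠ 0 := fib_cast_ne_zero le_rfl
    field_simp
    simp
  | succ j =>
    rw [xF_coeff_succ, fderivF_coeff]
    have h1 : (Nat.fib (j + 1 + 1) : K) ≠ 0 := fib_cast_ne_zero (by omega)
    have h2 : (Nat.fib (j + 1) : K) ≠ 0 := fib_cast_ne_zero (by omega)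
    field_simp
    push_cast
    ring

lemma gp_fderiv_pow (k : ℕ) :
    GPderiv K (fderivF K ^ (k + 1)) = ((k : K) + 1) • (fderivF K ^ k) := by
  induction k with
  | zero => rw [pow_one, pow_zero, gp_fderiv]; simp
  | succ k ih =>
    rw [pow_succ, gp_mul, ih, gp_fderiv, mul_one, smul_mul_assoc, ← pow_succ]
    push_cast
    module

lemma fderiv_comm_pow (k : ℕ) (p : Polynomial K) :
    fderivF K ((fderivF K ^ k) p) = (fderivF K ^ k) (fderivF K p) := by
  rw [← Module.End.mul_apply, ← pow_succ', pow_succ, Module.End.mul_apply]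

lemma shiftInv_fderiv : ShiftInv K (fderivF K) := by
  intro y p
  have hd : (fderivF K p).natDegree < p.natDegree + 1 := by
    have := natDegree_fderivF_pow_le 1 p
    rw [pow_one] at this; omega
  rw [Etrans_eq y p (Nat.lt_succ_self _), Etrans_eq y (fderivF K p) hd, map_sum]
  refine Finset.sum_congr rfl fun k _ => ?_
  rw [map_smul]
  congr 1
  exact fderiv_comm_pow k p

lemma fderiv_pow_Etrans (k : ℕ) (y : K) (p : Polynomial K) :
    (fderivF K ^ k) (Etrans K y p) = Etrans K y ((fderivF K ^ k) p) := by
  induction k generalizing p with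
  | zero => simp
  | succ k ih =>
    rw [pow_succ, Module.End.mul_apply, shiftInv_fderiv y p, ih, ← Module.End.mul_apply,
      ← pow_succ]

lemma natDegree_xF_le (p : Polynomial K) : (xF K p).natDegree ≤ p.natDegree + 1 := by
  apply Polynomial.natDegree_le_iff_coeff_eq_zero.2
  intro m hm
  cases m with
  | zero => exact xF_coeff_zero p
  | succ j =>
    rw [xF_coeff_succ, coeff_eq_zero_of_natDegree_lt (by omega), mul_zero]

lemma gp_expansion {T : Module.End K (Polynomial K)} (hT : ShiftInv K T)
    (p : Polynomial K) {N : ℕ} (h : p.natDegree + 1 < N) :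
    GPderiv K T p = ∑ k ∈ range N, ((T ((X : Polynomial K) ^ k)).eval 0 / (Ffact k : K)) •
      GPderiv K (fderivF K ^ k) p := by
  have hxp : (xF K p).natDegree < N := by have := natDegree_xF_le p; omega
  rw [GPderiv_apply, expansion hT (xF K p) hxp, expansion hT p (by omega : p.natDegree < N),
    map_sum, ← Finset.sum_sub_distrib]
  refine Finset.sum_congr rfl fun k _ => ?_
  rw [map_smul, ← smul_sub, GPderiv_apply]

lemma shiftInv_gp {T : Module.End K (Polynomial K)} (hT : ShiftInv K T) :
    ShiftInv K (GPderiv K T) := by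
  intro y p
  set N := p.natDegree + 2 with hN
  have h1 : (Etrans K y p).natDegree + 1 < N := by
    have := natDegree_Etrans_le y p; omega
  rw [gp_expansion hT (Etrans K y p) h1, gp_expansion hT p (by omega : p.natDegree + 1 < N)]
  have h2 : ∀ k ∈ range N, ((T ((X : Polynomial K) ^ k)).eval 0 / (Ffact k : K)) •
      GPderiv K (fderivF K ^ k) (Etrans K y p)
      = EtransL K y (((T ((X : Polynomial K) ^ k)).eval 0 / (Ffact k : K)) •
        GPderiv K (fderivF K ^ k) p) := by
    intro k _
    rw [map_smul]
    congr 1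
    cases k with
    | zero => rw [pow_zero, gp_one]; simp [EtransL_apply]; rw [← EtransL_apply, map_zero]
    | succ j =>
      rw [gp_fderiv_pow, LinearMap.smul_apply, LinearMap.smul_apply, EtransL_apply,
        Etrans_smul, fderiv_pow_Etrans]
  rw [Finset.sum_congr rfl h2, ← map_sum]
  rfl

lemma Etrans_C (y c : K) : Etrans K y (C c) = C c := by
  rw [Etrans_eq y (C c) (N := 1) (by rw [natDegree_C]; omega)]
  simp [Ffact]

lemma Etrans_X (y : K) : Etrans K y (X : Polynomial K) = X + C y := by
  rw [Etrans_eq y X (N := 2) (by rw [natDegree_X]; omega)]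
  have hfx : fderivF K (X : Polynomial K) = 1 := by
    rw [← Polynomial.monomial_one_one_eq_X, fderivF_monomial]
    simp
  have h0 : (Ffact 0 : K) = 1 := by norm_num [Ffact]
  have h1 : (Ffact 1 : K) = 1 := by norm_num [Ffact]
  rw [Finset.sum_range_succ, Finset.sum_range_one, h0, h1]
  simp [hfx, Polynomial.smul_eq_C_mul]

lemma delta_one {Q : Module.End K (Polynomial K)} (hQ : DeltaOp K Q) : Q 1 = 0 := by
  obtain ⟨hsi, c, hc, hQX⟩ := hQ
  have h := hsi 1 X
  rw [Etrans_X, map_add, hQX, Etrans_C, add_eq_left] at h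
  rwa [Polynomial.C_1] at h

lemma delta_natDegree_eq_zero {Q : Module.End K (Polynomial K)} (hQ : DeltaOp K Q)
    {p : Polynomial K} (hp : Q p = 0) : p.natDegree = 0 := by
  by_contra hn
  set n := p.natDegree with hdef
  have hn1 : 1 ≤ n := by omega
  have hp0 : p ≠ 0 := fun h => hn (by rw [h] at hdef; simp [hdef])
  obtain ⟨hsi, c, hc, hQX⟩ := hQ
  have hexp := expansion hsi p (N := n + 1) (Nat.lt_succ_self _)
  have hco := congrArg (fun q => Polynomial.coeff q (n - 1)) hexp
  rw [hp] at hco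
  simp only [Polynomial.coeff_zero, Polynomial.finset_sum_coeff, coeff_smul, smul_eq_mul] at hco
  rw [Finset.sum_eq_single 1 (fun k hk hk1 => ?_) (fun h1 => absurd (Finset.mem_range.2 (by omega)) h1)] at hco
  · rw [pow_one, hQX] at hco
    have hF1 : (Ffact 1 : K) = 1 := by norm_num [Ffact]
    rw [hF1, eval_C, pow_one, fderivF_coeff, show n - 1 + 1 = n by omega] at hco
    have hfib : (Nat.fib n : K) ≠ 0 := fib_cast_ne_zero hn1
    have hpn : p.coeff n ≠ 0 := by
      rw [hdef]; exact Polynomial.coeff_ne_zero_of_eq_degree (Polynomial.degree_eq_natDegree hp0)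
    field_simp at hco
    exact (mul_ne_zero (mul_ne_zero hc hfib) hpn) hco.symm
  · cases k with
    | zero =>
      rw [pow_zero (X : Polynomial K), delta_one ⟨hsi, c, hc, hQX⟩, Polynomial.eval_zero,
        zero_div, zero_mul]
    | succ j =>
      have hj : 2 ≤ j + 1 := by omega
      rw [fderivF_pow_coeff, coeff_eq_zero_of_natDegree_lt (by omega), mul_zero, mul_zero]

lemma delta_ker0 {Q : Module.End K (Polynomial K)} (hQ : DeltaOp K Q)
    {p : Polynomial K} (hp : Q p = 0) (h0 : p.eval 0 = 0) : p = 0 := by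
  have hd := delta_natDegree_eq_zero hQ hp
  have hC := Polynomial.eq_C_of_natDegree_eq_zero hd
  rw [hC, eval_C] at h0
  rw [hC, h0, Polynomial.C_0]

lemma rodrigues {Q : Module.End K (Polynomial K)} (hQ : DeltaOp K Q)
    {Q'inv : Module.End K (Polynomial K)} (hQ'inv : ShiftInv K Q'inv)
    (hinv : GPderiv K Q * Q'inv = 1)
    {q : ℕ → Polynomial K} (hq : BasicSeq K Q q) :
    ∀ n : ℕ, q (n + 1) = ((Nat.fib (n + 1) : K) / ((n : K) + 1)) • xF K (Q'inv (q n)) := by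
  obtain ⟨hdeg, h0, hev, hQq⟩ := hq
  have step : ∀ n : ℕ, Q (xF K (Q'inv (q n))) = ((n : K) + 1) • q n →
      q (n + 1) = ((Nat.fib (n + 1) : K) / ((n : K) + 1)) • xF K (Q'inv (q n)) := by
    intro n hQv
    have hn1 : ((n : K) + 1) ≠ 0 := Nat.cast_add_one_ne_zero n
    set d := q (n + 1) - ((Nat.fib (n + 1) : K) / ((n : K) + 1)) • xF K (Q'inv (q n)) with hd
    have hQd : Q d = 0 := by
      rw [hd, map_sub, map_smul, hQv, hQq (n + 1) (by omega),
        show n + 1 - 1 = n from rfl, smul_smul, div_mul_cancel₀ _ hn1, sub_self]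
    have hed : d.eval 0 = 0 := by
      rw [hd, eval_sub, hev (n + 1) (by omega), eval_zero_smul, xF_eval_zero, mul_zero,
        sub_zero]
    have hz := delta_ker0 hQ hQd hed
    rw [hd, sub_eq_zero] at hz
    exact hz
  have hgpv : ∀ n : ℕ, GPderiv K Q (Q'inv (q n)) = q n := fun n => by
    rw [← Module.End.mul_apply, hinv, Module.End.one_apply]
  have hsplit : ∀ n : ℕ, Q (xF K (Q'inv (q n))) = xF K (Q'inv (Q (q n))) + q n := by
    intro n
    have h1 := GPderiv_apply Q (Q'inv (q n))
    rw [hgpv n] at h1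
    have h2 := sub_eq_iff_eq_add.mp h1.symm
    rw [h2, shiftInv_comm hQ.1 hQ'inv (q n)]
    exact add_comm _ _
  intro n
  induction n with
  | zero =>
    apply step
    rw [hsplit 0, h0, delta_one hQ, map_zero, map_zero, zero_add]
    norm_num
  | succ m ih =>
    apply step
    have hm1 : (Nat.fib (m + 1) : K) ≠ 0 := fib_cast_ne_zero (by omega)
    have hmc : ((m : K) + 1) ≠ 0 := Nat.cast_add_one_ne_zero m
    have hxv : xF K (Q'inv (q m)) = (((m : K) + 1) / (Nat.fib (m + 1) : K)) • q (m + 1) := by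
      rw [ih, smul_smul, div_mul_div_comm, mul_comm ((m : K) + 1) _,
        div_self (by exact mul_ne_zero hm1 hmc), one_smul]
    rw [hsplit (m + 1), hQq (m + 1) (by omega), show m + 1 - 1 = m from rfl, map_smul,
      map_smul, hxv, smul_smul]
    have hc : (Nat.fib (m + 1) : K) * (((m : K) + 1) / (Nat.fib (m + 1) : K)) = (m : K) + 1 := by
      field_simp
    rw [hc]
    push_cast
    module


end AuxLemmas

/-- recurrence relation for Sheffer F-polynomials:
`s_{n+1} = (F_{n+1}/(n+1)) · [x̂_F − S'∘S^{−1}] ∘ (Q')^{−1} s_n`. -/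
theorem sheffer_recurrence (Q : Module.End K (Polynomial K)) (hQ : DeltaOp K Q)
    (Q'inv : Module.End K (Polynomial K)) (hQ'inv : ShiftInv K Q'inv)
    (hinvQ : GPderiv K Q * Q'inv = 1 ∧ Q'inv * GPderiv K Q = 1)
    (S Sinv : Module.End K (Polynomial K)) (hS : ShiftInv K S) (hSinv : ShiftInv K Sinv)
    (hinvS : S * Sinv = 1 ∧ Sinv * S = 1)
    (q : ℕ → Polynomial K) (hq : BasicSeq K Q q)
    (s : ℕ → Polynomial K) (hs : ∀ n : ℕ, s n = Sinv (q n)) :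
    ∀ n : ℕ, s (n + 1) = ((Nat.fib (n + 1) : K) / ((n : K) + 1)) •
      (((xF K - GPderiv K S * Sinv) * Q'inv) (s n)) := by
  intro n
  have hrod := rodrigues hQ hQ'inv hinvQ.1 hq n
  rw [hs (n + 1), hs n, hrod, map_smul]
  congr 1
  set u := Q'inv (q n) with hu
  have hSinvxF : Sinv (xF K u) = xF K (Sinv u) - Sinv (GPderiv K S (Sinv u)) := by
    have h1 : GPderiv K S * Sinv + S * GPderiv K Sinv = 0 := by
      rw [← gp_mul, hinvS.1, gp_one]
    have h1u := congrArg (fun T : Module.End K (Polynomial K) => T u) h1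
    simp only [LinearMap.add_apply, Module.End.mul_apply, LinearMap.zero_apply] at h1u
    have h5 : Sinv (GPderiv K S (Sinv u)) + Sinv (S (GPderiv K Sinv u)) = 0 := by
      rw [← map_add, h1u, map_zero]
    have h6 : Sinv (S (GPderiv K Sinv u)) = GPderiv K Sinv u := by
      rw [← Module.End.mul_apply, hinvS.2, Module.End.one_apply]
    rw [h6] at h5
    have h7 := GPderiv_apply Sinv u
    linear_combination h5 - h7
  have hcomm1 : Q'inv (Sinv (q n)) = Sinv u := shiftInv_comm hQ'inv hSinv (q n)
  have hS' := shiftInv_gp hS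
  have hcomm2 : Sinv (GPderiv K S (Sinv u)) = GPderiv K S (Sinv (Sinv u)) :=
    shiftInv_comm hSinv hS' (Sinv u)
  rw [Module.End.mul_apply, hcomm1, LinearMap.sub_apply, Module.End.mul_apply, hSinvxF, hcomm2]
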